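/- In a QoS satisfaction game with homogeneous users (common channel thresholds T^c), if ∑_{c=1}^C T^c ≥ N, then there exists a strategy profile in which all N players are satisfied (a satisfaction equilibrium). -/

import Mathlib

open Finset

/-- Congestion level of channel `c`: number of players choosing `c`. -/
def cong {N C : ℕ} (x : Fin N → Option (Fin C)) (c : Fin C) : ℕ :=
  (Finset.univ.filter fun n => x n = some c).card

/-- Utility with homogeneous users: common threshold `T c` on each channel `c`. -/
def utilH {N C : ℕ} (T : Fin C → ℕ) (x : Fin N → Option (Fin C)) (n : Fin N) : ℤ :=
  match x n with
  | none => 0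
  | some c => if cong x c ≤ T c then 1 else -1

/-- Pure Nash equilibrium. -/
def IsNashH {N C : ℕ} (T : Fin C → ℕ) (x : Fin N → Option (Fin C)) : Prop :=
  ∀ (n : Fin N) (s : Option (Fin C)), utilH T (Function.update x n s) n ≤ utilH T x n

/-- Number of satisfied players. -/
def BH {N C : ℕ} (T : Fin C → ℕ) (x : Fin N → Option (Fin C)) : ℕ :=
  (Finset.univ.filter fun n => utilH T x n = 1).card

/-- With homogeneous users, if `∑_c T^c ≥ N` then there is a strategy profile
in which all `N` players are satisfied (a satisfaction equilibrium). -/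
theorem satisfaction_equilibrium_exists {N C : ℕ} (T : Fin C → ℕ)
    (hT : N ≤ ∑ c : Fin C, T c) :
    ∃ x : Fin N → Option (Fin C), ∀ n : Fin N, utilH T x n = 1 := by
  have hcard : Fintype.card (Fin N) ≤ Fintype.card (Σ c : Fin C, Fin (T c)) := by
    simpa [Fintype.card_sigma] using hT
  obtain ⟨f⟩ := Function.Embedding.nonempty_of_card_le hcard
  refine ⟨fun n => some (f n).1, fun n => ?_⟩
  have hcong : ∀ c : Fin C, cong (fun n => some ((f n).1)) c ≤ T c := by
    intro c
    have : cong (fun n => some ((f n).1)) c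
        = (Finset.univ.filter fun n : Fin N => (f n).1 = c).card := by
      simp [cong]
    rw [this]
    have := Finset.card_le_card_of_injOn (f := fun n : Fin N => ((f n).2 : ℕ))
      (s := Finset.univ.filter fun n : Fin N => (f n).1 = c)
      (t := Finset.range (T c))
      (by
        intro n hn
        simp only [Finset.coe_filter, Set.mem_setOf_eq, Finset.mem_filter, Finset.mem_univ, true_and] at hn
        simp only [Finset.mem_coe, Finset.mem_range]
        exact hn ▸ (f n).2.isLt)
      (by
        intro a ha b hb hab
        simp only [Finset.coe_filter, Set.mem_setOf_eq, Finset.mem_univ, true_and] at ha hb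
        apply f.injective
        have hv : ((f a).2 : ℕ) = ((f b).2 : ℕ) := hab
        have h1 : (f a).1 = (f b).1 := ha.trans hb.symm
        exact Sigma.ext h1 ((Fin.heq_ext_iff (congrArg T h1)).mpr hv))
    simpa using this
  simp [utilH, hcong ((f n).1)]
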